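/- Let M be an n×n matrix over 𝔽₂ with zero diagonal, let p, p' be distinct standard basis vectors such that ⟨Mp, p'⟩ = ⟨Mp', p⟩ = 0, the row and column of M indexed by p' are zero, and suppose A ∈ 𝔽₂ⁿ satisfies ⟨A, p'⟩ = 0 and ⟨Mx, Mᵀy⟩ = ⟨Mx, y⟩(1 + ⟨A, x + y⟩) for all standard basis vectors x, y. Define the matrix N by: Nu = Mu + ⟨Mu, p⟩((Mp + p') + ⟨u, Mp⟩u) for standard basis vectors u ≠ p', and Np' = Mp. Then with B = A + S(M)p + ⟨A, p⟩p', we have ⟨Nu, Nᵀv⟩ = ⟨Nu, v⟩(1 + ⟨B, u + v⟩) for all standard basis vectors u, v. -/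
import Mathlib


open Matrix

/-- Standard basis vector over the field with two elements. -/
def e {n : ℕ} (i : Fin n) : Fin n → ZMod 2 := Pi.single i 1

/-- `SM M` is the matrix with `⟨SM M x, y⟩ = ⟨M x, y⟩ * ⟨M y, x⟩` on standard basis vectors. -/
def SM {n : ℕ} (M : Matrix (Fin n) (Fin n) (ZMod 2)) : Matrix (Fin n) (Fin n) (ZMod 2) :=
  Matrix.of fun i j => (M.mulVec (e j) ⬝ᵥ e i) * (M.mulVec (e i) ⬝ᵥ e j)

lemma e_dot {n : ℕ} (i : Fin n) (w : Fin n → ZMod 2) : e i ⬝ᵥ w = w i := by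
  rw [e, single_dotProduct, one_mul]

lemma dot_e {n : ℕ} (w : Fin n → ZMod 2) (i : Fin n) : w ⬝ᵥ e i = w i := by
  rw [e, dotProduct_single, mul_one]

lemma mulVec_e {n : ℕ} (M : Matrix (Fin n) (Fin n) (ZMod 2)) (j : Fin n) :
    M.mulVec (e j) = fun i => M i j := by
  funext i; simp [e, mulVec_single]

lemma e_same {n : ℕ} (i : Fin n) : e i i = 1 := Pi.single_eq_same i 1
lemma e_ne {n : ℕ} {i j : Fin n} (h : j ≠ i) : e i j = 0 := Pi.single_eq_of_ne h 1

theorem stmt_13 {n : ℕ} (M : Matrix (Fin n) (Fin n) (ZMod 2))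
    (hdiag : ∀ q : Fin n, M.mulVec (e q) ⬝ᵥ e q = 0)
    (p p' : Fin n) (hpp' : p ≠ p')
    (h1 : M.mulVec (e p) ⬝ᵥ e p' = 0) (h2 : M.mulVec (e p') ⬝ᵥ e p = 0)
    (hrow : ∀ u : Fin n, M.mulVec (e u) ⬝ᵥ e p' = 0)
    (hcol : ∀ u : Fin n, Mᵀ.mulVec (e u) ⬝ᵥ e p' = 0)
    (A : Fin n → ZMod 2) (hAp' : A ⬝ᵥ e p' = 0)
    (hA : ∀ x y : Fin n, M.mulVec (e x) ⬝ᵥ Mᵀ.mulVec (e y) =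
      (M.mulVec (e x) ⬝ᵥ e y) * (1 + A ⬝ᵥ (e x + e y)))
    (N : Matrix (Fin n) (Fin n) (ZMod 2))
    (hN : ∀ u : Fin n, u ≠ p' → N.mulVec (e u) =
      M.mulVec (e u) + (M.mulVec (e u) ⬝ᵥ e p) •
        ((M.mulVec (e p) + e p') + (e u ⬝ᵥ M.mulVec (e p)) • e u))
    (hNp' : N.mulVec (e p') = M.mulVec (e p)) :
    ∀ u v : Fin n,
      N.mulVec (e u) ⬝ᵥ Nᵀ.mulVec (e v) =
        (N.mulVec (e u) ⬝ᵥ e v) *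
          (1 + (A + (SM M).mulVec (e p) + (A ⬝ᵥ e p) • e p') ⬝ᵥ (e u + e v)) := by
  -- entrywise facts
  have hd : ∀ q : Fin n, M q q = 0 := fun q => by
    have := hdiag q; rwa [dot_e, mulVec_e] at this
  have hr : ∀ u : Fin n, M p' u = 0 := fun u => by
    have := hrow u; rwa [dot_e, mulVec_e] at this
  have hc : ∀ u : Fin n, M u p' = 0 := fun u => by
    have := hcol u; rw [dot_e, mulVec_e] at this; simpa using this
  have hAp : A p' = 0 := by rwa [dot_e] at hAp'
  -- uniform column formula
  have hNc : ∀ u : Fin n, N.mulVec (e u) =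
      M.mulVec (e u) + (M p u + e p' u) • M.mulVec (e p) + (M p u) • e p'
        + (M p u * M u p) • e u := by
    intro u
    by_cases hu : u = p'
    · subst hu
      rw [hNp']
      funext i
      simp [mulVec_e, hc, e_same, hr]
    · rw [hN u hu]
      funext i
      simp only [mulVec_e, dot_e, e_dot, e_ne hu, Pi.add_apply, Pi.smul_apply, smul_eq_mul]
      ring
  -- row formula
  have hNr : ∀ v : Fin n, Nᵀ.mulVec (e v) =
      Mᵀ.mulVec (e v) + (M v p) • (Mᵀ.mulVec (e p) + e p')
        + (e p' v) • Mᵀ.mulVec (e p) + (M p v * M v p) • e v := by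
    intro v
    funext i
    have h : (N.mulVec (e i)) v = _ := congrFun (hNc i) v
    rw [mulVec_e] at h
    simp only [mulVec_e, transpose_apply, Pi.add_apply, Pi.smul_apply, smul_eq_mul] at h ⊢
    rw [h]
    by_cases hiv : i = v
    · subst hiv; ring
    · rw [e_ne hiv, e_ne (Ne.symm hiv)]; ring
  have hc2 : ∀ y : Fin n, e p' ⬝ᵥ Mᵀ.mulVec (e y) = 0 := fun y => by
    rw [e_dot, mulVec_e]; simpa using hc y
  intro u v
  rw [hNc u, hNr v]
  simp only [add_dotProduct, dotProduct_add, smul_dotProduct, dotProduct_smul, smul_eq_mul,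
    hA, hrow, hc2]
  simp only [dot_e, e_dot, mulVec_e, transpose_apply, Pi.add_apply, Pi.smul_apply,
    smul_eq_mul, SM, of_apply, hd, e_same]
  by_cases hu : u = p'
  · subst hu
    by_cases hv : v = u
    · subst hv
      simp [hr, hc, hAp, hd, e_same]
    · simp only [hr, hc, hAp, hd, e_same, e_ne hv, e_ne (Ne.symm hv)]
      generalize M v p = a; generalize M p v = b; generalize A v = x; generalize A p = y
      revert a b x y; decide
  · by_cases hv : v = p'
    · subst hv
      simp only [hr, hc, hAp, hd, e_same, e_ne hu, e_ne (Ne.symm hu)]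
      generalize M p u = a; generalize M u p = b; generalize A u = x; generalize A p = y
      revert a b x y; decide
    · by_cases huv : u = v
      · subst huv
        simp only [hd, e_same, e_ne hu, e_ne (Ne.symm hu), e_ne hv, e_ne (Ne.symm hv)]
        generalize M p u = a; generalize M u p = b; generalize A u = x; generalize A p = y
        revert a b x y; decide
      · simp only [e_ne hu, e_ne (Ne.symm hu), e_ne hv, e_ne (Ne.symm hv), e_ne huv,
          e_ne (Ne.symm huv)]
        generalize M v u = a; generalize M p u = b; generalize M u p = c
        generalize M v p = d; generalize M p v = f
        generalize A u = x; generalize A v = y; generalize A p = z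
        revert a b c d f x y z; decide
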